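/- Let A, B, X be bounded linear operators on a complex Hilbert space H, let m > 0 be a real number, and suppose X − mI is a positive operator. Then m‖Re(A) − Re(B)‖ ≤ w(Re(A)X − X Re(B)) ≤ (1/2) sup over θ ∈ ℝ of ‖(AX − XB) + e^{iθ}(XA − BX)‖ ≤ (‖AX − XB‖ + ‖XA − BX‖)/2, where Re(T) = (T + T*)/2 and w denotes the numerical radius. -/

import Mathlib

/-!
With `U = AX - XB` and `V = XA - BX`, self-adjointness of `X` gives
`S := Re(A) X - X Re(B) = (U + V*) / 2`, so `2 ⟪S x, x⟫ = ⟪U x, x⟫ + conj ⟪V x, x⟫`; choosing `θ`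
with `e^{-iθ} ⟪V x, x⟫ = conj ⟪V x, x⟫` this is `⟪(U + e^{iθ} V) x, x⟫`, which gives the middle
inequality, and the last one is the triangle inequality.

For the first one, `re ⟪S x, x⟫ = re ⟪X x, D x⟫` with `D = Re(A) - Re(B)` self-adjoint. Since
`‖D‖ = sup |⟪D x, x⟫|`, there are unit vectors with `D x ≈ λ x` and `|λ| ≈ ‖D‖`: for
`λ = re ⟪D x, x⟫` one has `‖D x - λ x‖² ≤ ‖D‖² - λ²`. On them `re ⟪X x, D x⟫ ≈ λ re ⟪X x, x⟫`,
whose modulus is at least `m |λ|` because `X ≥ m`.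
-/

/-- The numerical radius of a bounded linear operator. -/
noncomputable def numRadius {E : Type*} [NormedAddCommGroup E] [InnerProductSpace ℂ E]
    (T : E →L[ℂ] E) : ℝ :=
  ⨆ x : {x : E // ‖x‖ = 1}, ‖(inner ℂ (T x.val) x.val : ℂ)‖

open ContinuousLinearMap RCLike ComplexConjugate Filter Set

section ApproximateEigenvector

variable {𝕜 E : Type*} [RCLike 𝕜] [NormedAddCommGroup E] [InnerProductSpace 𝕜 E]

local notation "⟪" x ", " y "⟫" => inner 𝕜 x y

theorem norm_sub_re_inner_smul_sq (T : E →L[𝕜] E) {x : E} (hx : ‖x‖ = 1) :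
    ‖T x - (re ⟪T x, x⟫ : 𝕜) • x‖ ^ 2 = ‖T x‖ ^ 2 - re ⟪T x, x⟫ ^ 2 := by
  rw [norm_sub_sq (𝕜 := 𝕜), inner_smul_right, re_ofReal_mul, norm_smul, norm_ofReal, hx,
    mul_one, sq_abs]
  ring

theorem LinearMap.IsSymmetric.exists_lt_abs_re_inner {T : E →L[𝕜] E}
    (hT : (T : E →ₗ[𝕜] E).IsSymmetric) {c : ℝ} (hc₀ : 0 ≤ c) (hc : c < ‖T‖) :
    ∃ x : E, ‖x‖ = 1 ∧ c < |re ⟪T x, x⟫| := by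
  rw [T.norm_eq_iSup_rayleighQuotient hT] at hc
  obtain ⟨y, hy⟩ := exists_lt_of_lt_ciSup hc
  have hy₀ : y ≠ 0 := by
    rintro rfl
    rw [rayleighQuotient_apply_zero, abs_zero] at hy
    linarith
  refine ⟨(‖y‖⁻¹ : 𝕜) • y, norm_smul_inv_norm hy₀, ?_⟩
  rw [← T.rayleigh_smul y (c := (‖y‖⁻¹ : 𝕜)) (by simpa using hy₀)] at hy
  simpa [rayleighQuotient, reApplyInnerSelf_apply, norm_smul_inv_norm hy₀] using hy

theorem mul_norm_le_of_abs_re_inner_le {D X : E →L[𝕜] E} (hD : (D : E →ₗ[𝕜] E).IsSymmetric)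
    {m M : ℝ} (hm : 0 ≤ m) (hX : ∀ x : E, ‖x‖ = 1 → m ≤ re ⟪X x, x⟫) (hM₀ : 0 ≤ M)
    (hM : ∀ x : E, ‖x‖ = 1 → |re ⟪X x, D x⟫| ≤ M) : m * ‖D‖ ≤ M := by
  rcases (norm_nonneg D).eq_or_lt with hD₀ | hD₀
  · rwa [← hD₀, mul_zero]
  have key : ∀ c ∈ Ioo 0 ‖D‖, m * c - ‖X‖ * √(‖D‖ ^ 2 - c ^ 2) ≤ M := by
    rintro c ⟨hc₀, hc⟩
    obtain ⟨x, hx, hcx⟩ := hD.exists_lt_abs_re_inner hc₀.le hc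
    set l := re ⟪D x, x⟫
    have hDx : ‖D x‖ ≤ ‖D‖ := by simpa [hx] using D.le_opNorm x
    have herr : ‖D x - (l : 𝕜) • x‖ ≤ √(‖D‖ ^ 2 - c ^ 2) := by
      refine Real.le_sqrt_of_sq_le ?_
      rw [norm_sub_re_inner_smul_sq D hx]
      have : c ^ 2 ≤ l ^ 2 := by rw [← sq_abs l]; gcongr
      nlinarith [norm_nonneg (D x)]
    have hsplit : re ⟪X x, D x⟫ = l * re ⟪X x, x⟫ + re ⟪X x, D x - (l : 𝕜) • x⟫ := by
      rw [inner_sub_right, inner_smul_right, map_sub, re_ofReal_mul]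
      ring
    have hmain : m * c ≤ |l * re ⟪X x, x⟫| := by
      rw [abs_mul, abs_of_nonneg (hm.trans (hX x hx))]
      nlinarith [hX x hx]
    have hsmall : |re ⟪X x, D x - (l : 𝕜) • x⟫| ≤ ‖X‖ * √(‖D‖ ^ 2 - c ^ 2) :=
      calc |re ⟪X x, D x - (l : 𝕜) • x⟫| ≤ ‖X x‖ * ‖D x - (l : 𝕜) • x‖ :=
            (abs_re_le_norm _).trans (norm_inner_le_norm _ _)
        _ ≤ ‖X‖ * √(‖D‖ ^ 2 - c ^ 2) := by
            gcongr
            simpa [hx] using X.le_opNorm x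
    have := hM x hx
    rw [hsplit] at this
    linarith [abs_sub_abs_le_abs_add (l * re ⟪X x, x⟫) (re ⟪X x, D x - (l : 𝕜) • x⟫)]
  have hlim : Tendsto (fun c => m * c - ‖X‖ * √(‖D‖ ^ 2 - c ^ 2)) (nhdsWithin ‖D‖ (Iio ‖D‖))
      (nhds (m * ‖D‖)) := by
    have : Continuous (fun c => m * c - ‖X‖ * √(‖D‖ ^ 2 - c ^ 2)) := by fun_prop
    simpa using this.continuousWithinAt.tendsto (x := ‖D‖) (s := Iio ‖D‖)
  exact le_of_tendsto hlim (eventually_of_mem (Ioo_mem_nhdsLT hD₀) key)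

end ApproximateEigenvector

theorem LinearMap.IsSymmetric.re_inner_mul_sub_mul_apply_self {𝕜 E : Type*} [RCLike 𝕜]
    [NormedAddCommGroup E] [InnerProductSpace 𝕜 E] {P X : E →L[𝕜] E}
    (hP : (P : E →ₗ[𝕜] E).IsSymmetric) (hX : (X : E →ₗ[𝕜] E).IsSymmetric) (Q : E →L[𝕜] E)
    (x : E) : re (inner 𝕜 ((P * X - X * Q) x) x) = re (inner 𝕜 (X x) ((P - Q) x)) := by
  have hPX : inner 𝕜 (P (X x)) x = inner 𝕜 (X x) (P x) := hP (X x) x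
  have hXQ : inner 𝕜 (X (Q x)) x = inner 𝕜 (Q x) (X x) := hX (Q x) x
  rw [_root_.sub_apply, mul_apply_eq_comp, mul_apply_eq_comp, inner_sub_left, hPX, hXQ,
    _root_.sub_apply, inner_sub_right, map_sub, map_sub, inner_re_symm (Q x)]

theorem ContinuousLinearMap.IsPositive.le_re_inner_of_sub_smul_one {𝕜 E : Type*} [RCLike 𝕜]
    [NormedAddCommGroup E] [InnerProductSpace 𝕜 E] {X : E →L[𝕜] E} {m : ℝ}
    (hX : (X - (m : 𝕜) • (1 : E →L[𝕜] E)).IsPositive) {x : E} (hx : ‖x‖ = 1) :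
    m ≤ re (inner 𝕜 (X x) x) := by
  have := hX.re_inner_nonneg_left x
  rw [sub_apply, inner_sub_left, smul_apply, one_apply_eq_self, inner_smul_left,
    inner_self_eq_norm_sq_to_K, hx] at this
  simpa using this

theorem smul_add_star_mul_sub_mul_smul_add_star {k R : Type*} [CommSemiring k] [Ring R]
    [StarRing R] [Algebra k R] {X : R} (hX : IsSelfAdjoint X) (c : k) (A B : R) :
    c • (A + star A) * X - X * (c • (B + star B)) =
      c • ((A * X - X * B) + star (X * A - B * X)) := by
  rw [star_sub, star_mul, star_mul, hX.star_eq, smul_mul_assoc, mul_smul_comm, ← smul_sub]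
  congr 1
  noncomm_ring

theorem exists_conj_exp_mul_eq_conj (b : ℂ) :
    ∃ θ : ℝ, conj (Complex.exp (θ * Complex.I)) * b = conj b := by
  refine ⟨2 * b.arg, ?_⟩
  have hb := b.norm_mul_exp_arg_mul_I
  generalize b.arg = a at hb ⊢
  generalize ‖b‖ = r at hb
  subst hb
  simp only [map_mul, Complex.conj_ofReal, ← Complex.exp_conj, Complex.conj_I]
  rw [mul_left_comm, ← Complex.exp_add]
  push_cast
  ring_nf

section NormAddExpSmul

variable {F : Type*} [SeminormedAddCommGroup F] [NormedSpace ℂ F]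

theorem norm_add_exp_smul_le (u v : F) (θ : ℝ) :
    ‖u + Complex.exp (θ * Complex.I) • v‖ ≤ ‖u‖ + ‖v‖ := by
  simpa [norm_smul, Complex.norm_exp_ofReal_mul_I] using
    norm_add_le u (Complex.exp (θ * Complex.I) • v)

theorem bddAbove_range_norm_add_exp_smul (u v : F) :
    BddAbove (range fun θ : ℝ => ‖u + Complex.exp (θ * Complex.I) • v‖) :=
  ⟨_, forall_mem_range.2 (norm_add_exp_smul_le u v)⟩

theorem iSup_norm_add_exp_smul_le (u v : F) :
    ⨆ θ : ℝ, ‖u + Complex.exp (θ * Complex.I) • v‖ ≤ ‖u‖ + ‖v‖ :=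
  ciSup_le (norm_add_exp_smul_le u v)

end NormAddExpSmul

section NumRadius

variable {E : Type*} [NormedAddCommGroup E] [InnerProductSpace ℂ E]

theorem norm_inner_apply_self_le_opNorm (T : E →L[ℂ] E) {x : E} (hx : ‖x‖ = 1) :
    ‖inner ℂ (T x) x‖ ≤ ‖T‖ :=
  calc ‖inner ℂ (T x) x‖ ≤ ‖T x‖ * ‖x‖ := norm_inner_le_norm _ _
    _ ≤ ‖T‖ * ‖x‖ * ‖x‖ := by gcongr; exact T.le_opNorm x
    _ = ‖T‖ := by rw [hx, mul_one, mul_one]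

theorem numRadius_nonneg (T : E →L[ℂ] E) : 0 ≤ numRadius T :=
  Real.iSup_nonneg fun _ => norm_nonneg _

theorem norm_inner_apply_self_le_numRadius (T : E →L[ℂ] E) {x : E} (hx : ‖x‖ = 1) :
    ‖inner ℂ (T x) x‖ ≤ numRadius T :=
  le_ciSup (f := fun x : {x : E // ‖x‖ = 1} => ‖inner ℂ (T x.val) x.val‖)
    ⟨‖T‖, forall_mem_range.2 fun y => norm_inner_apply_self_le_opNorm T y.2⟩ ⟨x, hx⟩

theorem numRadius_le {T : E →L[ℂ] E} {M : ℝ} (hM : 0 ≤ M)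
    (h : ∀ x : E, ‖x‖ = 1 → ‖inner ℂ (T x) x‖ ≤ M) : numRadius T ≤ M :=
  Real.iSup_le (fun x => h x.1 x.2) hM

theorem numRadius_smul (c : ℂ) (T : E →L[ℂ] E) : numRadius (c • T) = ‖c‖ * numRadius T := by
  simp only [numRadius, smul_apply, inner_smul_left, norm_mul, Complex.norm_conj]
  rw [Real.mul_iSup_of_nonneg (norm_nonneg c)]

theorem numRadius_add_adjoint_le_iSup [CompleteSpace E] (U V : E →L[ℂ] E) :
    numRadius (U + adjoint V) ≤ ⨆ θ : ℝ, ‖U + Complex.exp (θ * Complex.I) • V‖ := by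
  refine numRadius_le (Real.iSup_nonneg fun _ => norm_nonneg _) fun x hx => ?_
  obtain ⟨θ, hθ⟩ := exists_conj_exp_mul_eq_conj (inner ℂ (V x) x)
  calc ‖inner ℂ ((U + adjoint V) x) x‖
      = ‖inner ℂ ((U + Complex.exp (θ * Complex.I) • V) x) x‖ := by
        rw [add_apply, add_apply, inner_add_left, inner_add_left, smul_apply, inner_smul_left, hθ,
          adjoint_inner_left, inner_conj_symm]
    _ ≤ ‖U + Complex.exp (θ * Complex.I) • V‖ := norm_inner_apply_self_le_opNorm _ hx
    _ ≤ ⨆ θ : ℝ, ‖U + Complex.exp (θ * Complex.I) • V‖ :=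
        le_ciSup (bddAbove_range_norm_add_exp_smul U V) θ

end NumRadius

theorem stmt_15 {H : Type*} [NormedAddCommGroup H] [InnerProductSpace ℂ H] [CompleteSpace H]
    (A B X : H →L[ℂ] H) (m : ℝ) (hm : 0 < m)
    (hX : (X - (m : ℂ) • (1 : H →L[ℂ] H)).IsPositive)
    (ReA ReB : H →L[ℂ] H)
    (hReA : ReA = (2 : ℂ)⁻¹ • (A + ContinuousLinearMap.adjoint A))
    (hReB : ReB = (2 : ℂ)⁻¹ • (B + ContinuousLinearMap.adjoint B)) :
    (m * ‖ReA - ReB‖ ≤ numRadius (ReA * X - X * ReB)) ∧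
      (numRadius (ReA * X - X * ReB) ≤
        (1 / 2 : ℝ) * (⨆ θ : ℝ,
          ‖(A * X - X * B) + Complex.exp (θ * Complex.I) • (X * A - B * X)‖)) ∧
      ((1 / 2 : ℝ) * (⨆ θ : ℝ,
          ‖(A * X - X * B) + Complex.exp (θ * Complex.I) • (X * A - B * X)‖) ≤
        (‖A * X - X * B‖ + ‖X * A - B * X‖) / 2) := by
  have hXsa : IsSelfAdjoint X := by
    have := hX.isSelfAdjoint.add (IsSelfAdjoint.smul (Complex.conj_ofReal m) (.one _))
    rwa [sub_add_cancel] at this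
  have hRe (T : H →L[ℂ] H) : IsSelfAdjoint ((2 : ℂ)⁻¹ • (T + adjoint T)) :=
    (IsSelfAdjoint.ofNat 2).inv₀.smul (by simpa only [star_eq_adjoint] using .add_star_self T)
  have hReAsa : IsSelfAdjoint ReA := hReA ▸ hRe A
  have hReBsa : IsSelfAdjoint ReB := hReB ▸ hRe B
  refine ⟨?_, ?_, ?_⟩
  · refine mul_norm_le_of_abs_re_inner_le (hReAsa.sub hReBsa).isSymmetric hm.le
      (fun x hx => hX.le_re_inner_of_sub_smul_one hx) (numRadius_nonneg _) fun x hx => ?_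
    rw [← hReAsa.isSymmetric.re_inner_mul_sub_mul_apply_self hXsa.isSymmetric]
    exact (abs_re_le_norm _).trans (norm_inner_apply_self_le_numRadius _ hx)
  · have hS : ReA * X - X * ReB = (2 : ℂ)⁻¹ • ((A * X - X * B) + adjoint (X * A - B * X)) := by
      rw [hReA, hReB]
      simpa only [← star_eq_adjoint] using
        smul_add_star_mul_sub_mul_smul_add_star hXsa (2 : ℂ)⁻¹ A B
    rw [hS, numRadius_smul, norm_inv, Complex.norm_ofNat, one_div]
    gcongr
    exact numRadius_add_adjoint_le_iSup _ _
  · linarith [iSup_norm_add_exp_smul_le (A * X - X * B) (X * A - B * X)]
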